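/- In the sequent calculus ML (LJ without weakening-right) extended with initial sequents ⇒ ¬A → (A → B) for all A, B, the weakening-right rule is admissible: if Γ ⇒ (empty) is derivable then Γ ⇒ B is derivable for every formula B. -/
import Mathlib


/-- First-order terms: variables and constants. -/
inductive Tm : Type
  | var : ℕ → Tm
  | const : ℕ → Tm
deriving DecidableEq

/-- First-order formulas (negation primitive, as in LJ). -/
inductive Fml : Type
  | atom : ℕ → List Tm → Fml
  | and : Fml → Fml → Fml
  | or : Fml → Fml → Fml
  | imp : Fml → Fml → Fml
  | neg : Fml → Fml
  | all : ℕ → Fml → Fml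
  | ex : ℕ → Fml → Fml

/-- Substitute term `t` for variable `x` in a term. -/
def Tm.subst (x : ℕ) (t : Tm) : Tm → Tm
  | .var y => if y = x then t else .var y
  | .const c => .const c

/-- Substitute term `t` for the free occurrences of variable `x`. -/
def Fml.subst (x : ℕ) (t : Tm) : Fml → Fml
  | .atom p ts => .atom p (ts.map (Tm.subst x t))
  | .and A B => .and (A.subst x t) (B.subst x t)
  | .or A B => .or (A.subst x t) (B.subst x t)
  | .imp A B => .imp (A.subst x t) (B.subst x t)
  | .neg A => .neg (A.subst x t)
  | .all y A => if y = x then .all y A else .all y (A.subst x t)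
  | .ex y A => if y = x then .ex y A else .ex y (A.subst x t)

def Tm.freeIn (x : ℕ) : Tm → Prop
  | .var y => y = x
  | .const _ => False

/-- `x` occurs free in a formula. -/
def Fml.freeIn (x : ℕ) : Fml → Prop
  | .atom _ ts => ∃ s ∈ ts, s.freeIn x
  | .and A B => A.freeIn x ∨ B.freeIn x
  | .or A B => A.freeIn x ∨ B.freeIn x
  | .imp A B => A.freeIn x ∨ B.freeIn x
  | .neg A => A.freeIn x
  | .all y A => y ≠ x ∧ A.freeIn x
  | .ex y A => y ≠ x ∧ A.freeIn x

/-- Which optional rules a sequent-calculus system has: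
`cutOK C` says cuts on formula `C` are allowed, `wr` is weakening-right,
`tnd` is the tertium-non-datur rule, and `efq` is the family of initial
sequents `⇒ ¬A → (A → B)`. -/
structure Rules where
  cutOK : Fml → Prop
  wr : Prop
  tnd : Prop
  efq : Prop

/-- Derivability of a single-succedent sequent `Γ ⇒ Δ` (with `Δ` at most one
formula) in LJ-style sequent calculus without weakening-right, with the
optional rules given by `R`.  -/
inductive Deriv (R : Rules) : List Fml → Option Fml → Prop
  -- initial sequents
  | id (A : Fml) : Deriv R [A] (some A)
  | efq (h : R.efq) (A B : Fml) :
      Deriv R [] (some ((A.neg).imp (A.imp B)))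
  -- structural rules
  | xchg {Γ₁ Γ₂ : List Fml} {A B : Fml} {Δ : Option Fml} :
      Deriv R (Γ₁ ++ A :: B :: Γ₂) Δ → Deriv R (Γ₁ ++ B :: A :: Γ₂) Δ
  | contr {Γ : List Fml} {A : Fml} {Δ : Option Fml} :
      Deriv R (A :: A :: Γ) Δ → Deriv R (A :: Γ) Δ
  | wl {Γ : List Fml} {Δ : Option Fml} (A : Fml) :
      Deriv R Γ Δ → Deriv R (A :: Γ) Δ
  | wr (h : R.wr) {Γ : List Fml} (A : Fml) :
      Deriv R Γ none → Deriv R Γ (some A)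
  | cut {Γ Θ : List Fml} {A : Fml} {Δ : Option Fml} (h : R.cutOK A) :
      Deriv R Γ (some A) → Deriv R (A :: Θ) Δ → Deriv R (Γ ++ Θ) Δ
  -- tertium non datur rule
  | tnd (h : R.tnd) {Γ : List Fml} {A : Fml} {Δ : Option Fml} :
      Deriv R (A :: Γ) Δ → Deriv R (A.neg :: Γ) Δ → Deriv R Γ Δ
  -- logical rules
  | andL₁ {Γ : List Fml} {A B : Fml} {Δ : Option Fml} :
      Deriv R (A :: Γ) Δ → Deriv R (A.and B :: Γ) Δ
  | andL₂ {Γ : List Fml} {A B : Fml} {Δ : Option Fml} :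
      Deriv R (B :: Γ) Δ → Deriv R (A.and B :: Γ) Δ
  | andR {Γ : List Fml} {A B : Fml} :
      Deriv R Γ (some A) → Deriv R Γ (some B) → Deriv R Γ (some (A.and B))
  | orL {Γ : List Fml} {A B : Fml} {Δ : Option Fml} :
      Deriv R (A :: Γ) Δ → Deriv R (B :: Γ) Δ → Deriv R (A.or B :: Γ) Δ
  | orR₁ {Γ : List Fml} {A B : Fml} :
      Deriv R Γ (some A) → Deriv R Γ (some (A.or B))
  | orR₂ {Γ : List Fml} {A B : Fml} :
      Deriv R Γ (some B) → Deriv R Γ (some (A.or B))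
  | impL {Γ Θ : List Fml} {A B : Fml} {Δ : Option Fml} :
      Deriv R Γ (some A) → Deriv R (B :: Θ) Δ →
      Deriv R (A.imp B :: Γ ++ Θ) Δ
  | impR {Γ : List Fml} {A B : Fml} :
      Deriv R (A :: Γ) (some B) → Deriv R Γ (some (A.imp B))
  | negL {Γ : List Fml} {A : Fml} :
      Deriv R Γ (some A) → Deriv R (A.neg :: Γ) none
  | negR {Γ : List Fml} {A : Fml} :
      Deriv R (A :: Γ) none → Deriv R Γ (some A.neg)
  | allL {Γ : List Fml} {x : ℕ} {A : Fml} {Δ : Option Fml} (t : Tm) :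
      Deriv R (A.subst x t :: Γ) Δ → Deriv R (Fml.all x A :: Γ) Δ
  | allR {Γ : List Fml} {x : ℕ} {A : Fml} (a : ℕ)
      (hΓ : ∀ F ∈ Γ, ¬ F.freeIn a) (hA : ¬ (Fml.all x A).freeIn a) :
      Deriv R Γ (some (A.subst x (Tm.var a))) → Deriv R Γ (some (Fml.all x A))
  | exL {Γ : List Fml} {x : ℕ} {A : Fml} {Δ : Option Fml} (a : ℕ)
      (hΓ : ∀ F ∈ Γ, ¬ F.freeIn a) (hA : ¬ (Fml.ex x A).freeIn a)
      (hΔ : ∀ F, Δ = some F → ¬ F.freeIn a) :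
      Deriv R (A.subst x (Tm.var a) :: Γ) Δ → Deriv R (Fml.ex x A :: Γ) Δ
  | exR {Γ : List Fml} {x : ℕ} {A : Fml} (t : Tm) :
      Deriv R Γ (some (A.subst x t)) → Deriv R Γ (some (Fml.ex x A))

/-- ML: LJ without weakening-right (cut allowed on any formula). -/
def ML : Rules := ⟨fun _ => True, False, False, False⟩

/-- Cut-free ML. -/
def MLcf : Rules := ⟨fun _ => False, False, False, False⟩

/-- ML⁺: ML plus the tertium-non-datur rule. -/
def MLplus : Rules := ⟨fun _ => True, False, True, False⟩

/-- Cut-free ML⁺. -/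
def MLplusCF : Rules := ⟨fun _ => False, False, True, False⟩

/-- ML plus the initial sequents ⇒ ¬A → (A → B). -/
def MLefq : Rules := ⟨fun _ => True, False, False, True⟩

/-- ML plus the weakening-right rule. -/
def MLwr : Rules := ⟨fun _ => True, True, False, False⟩

/-- In ML extended with the initial sequents ⇒ ¬A → (A → B),
weakening-right is admissible. -/
theorem wr_admissible_in_MLefq (Γ : List Fml) (B : Fml)
    (h : Deriv MLefq Γ none) : Deriv MLefq Γ (some B) := by
  set C := B.imp B with hC
  have h1 : Deriv MLefq Γ (some C.neg) := .negR (.wl C h)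
  have hid : Deriv MLefq [B] (some B) := .id B
  have h2 : Deriv MLefq [] (some C) := .impR hid
  have h3 : Deriv MLefq [C.imp B] (some B) := by
    have := Deriv.impL (Γ := []) (Θ := []) (Δ := some B) h2 hid
    simpa using this
  have h4 : Deriv MLefq [C.neg] (some B) := by
    have := Deriv.impL (Γ := [C.neg]) (Θ := []) (Δ := some B) (.id C.neg) h3
    -- this : ((C.neg).imp (C.imp B)) :: [C.neg] ++ [] ⇒ B, need cut with efq
    have hefq : Deriv MLefq [] (some ((C.neg).imp (C.imp B))) := .efq trivial C B
    have := Deriv.cut (Γ := []) (h := trivial) hefq this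
    simpa using this
  have := Deriv.cut (Θ := []) (h := trivial) h1 h4
  simpa using this
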